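/- arXiv:2006.11573 — 3 statements merged into one kernel-verified Lean document; each statement's English description precedes it below -/
import Mathlib

section
/- Let B be a uniformly random subset of {1,…,n} of cardinality b (b-nice sampling) and let f_B(x) = (1/b) Σ_{i∈B} f_i(x). Then for every x ∈ ℝ^d and every minimizer x* of f: E_B[‖∇f_B(x) − ∇f_B(x*)‖²] ≤ 2 ℒ(b) · D_f(x, x*), where ℒ(b) = ((n−b)/(b(n−1))) L_max + (n(b−1)/(b(n−1))) L and L_max = max_i L_i. -/
open Finset
open scoped RealInnerProductSpace

/-!
Put `a i = ∇f_i(x) - ∇f_i(x*)`. Among the `C(n, b)` subsets `B`, each index lies in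
`C(n-1, b-1)` of them and each pair of distinct indices in `C(n-2, b-2)`; this gives the exact
formula
`E ‖b⁻¹ ∑_{i ∈ B} a i‖² = ((n - b) ∑ ‖a i‖² + (b - 1) ‖∑ a i‖²) / (b n (n - 1))`.
Both sums are controlled by co-coercivity of a convex `L`-smooth function,
`‖∇φ x - ∇φ y‖² ≤ 2 L D_φ(x, y)`: applied to each `f_i` (with `L_i ≤ L_max`) and summed, it gives
`∑ ‖a i‖² ≤ 2 L_max n D_f(x, x*)`; applied to `f`, whose gradient difference is `n⁻¹ ∑ a i`,
it gives `‖∑ a i‖² ≤ 2 L n² D_f(x, x*)`.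
-/

section Sampling

variable {ι : Type*} [Fintype ι] [DecidableEq ι]

theorem choose_card_mul_card_filter_superset_powersetCard (t : Finset ι) (b : ℕ) :
    (Fintype.card ι).choose #t * #{B ∈ univ.powersetCard b | t ⊆ B}
      = b.choose #t * (Fintype.card ι).choose b := by
  rcases le_or_gt #t b with htb | hbt
  · rw [card_filter_powersetCard_subset t univ b (subset_univ t) htb, card_univ (α := ι),
      mul_comm (b.choose _), Nat.choose_mul htb]
  · have hempty : {B ∈ (univ : Finset ι).powersetCard b | t ⊆ B} = ∅ := by
      refine filter_false_of_mem fun B hB htB => ?_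
      have := card_le_card htB
      rw [(mem_powersetCard.mp hB).2] at this
      omega
    simp [hempty, Nat.choose_eq_zero_of_lt hbt]

theorem card_mul_card_filter_mem_mem_powersetCard (i j : ι) (b : ℕ) :
    (Fintype.card ι : ℝ) * (Fintype.card ι - 1) * #{B ∈ univ.powersetCard b | i ∈ B ∧ j ∈ B}
      = b * (Fintype.card ι).choose b
        * (b - 1 + if i = j then (Fintype.card ι : ℝ) - b else 0) := by
  rcases eq_or_ne i j with rfl | hij
  · have h := choose_card_mul_card_filter_superset_powersetCard {i} b
    simp only [card_singleton, Nat.choose_one_right, singleton_subset_iff] at h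
    simp only [and_self, if_true]
    have h' : (Fintype.card ι : ℝ) * #{B ∈ univ.powersetCard b | i ∈ B}
        = b * (Fintype.card ι).choose b := by exact_mod_cast h
    linear_combination ((Fintype.card ι : ℝ) - 1) * h'
  · have h := choose_card_mul_card_filter_superset_powersetCard {i, j} b
    rw [card_pair hij] at h
    simp only [insert_subset_iff, singleton_subset_iff] at h
    have h' := congrArg (Nat.cast : ℕ → ℝ) h
    push_cast [Nat.cast_choose_two] at h'
    simp only [hij, if_false, add_zero]
    linear_combination 2 * h'

variable {E : Type*} [NormedAddCommGroup E] [InnerProductSpace ℝ E]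

theorem norm_sum_sq_eq_sum_sum_inner (B : Finset ι) (a : ι → E) :
    ‖∑ i ∈ B, a i‖ ^ 2 = ∑ i, ∑ j, if i ∈ B ∧ j ∈ B then ⟪a i, a j⟫ else 0 := by
  rw [← real_inner_self_eq_norm_sq, sum_inner]
  simp [ite_and, inner_sum, sum_ite_mem]

theorem card_mul_sum_powersetCard_norm_sum_sq (a : ι → E) (b : ℕ) :
    (Fintype.card ι : ℝ) * (Fintype.card ι - 1) * ∑ B ∈ univ.powersetCard b, ‖∑ i ∈ B, a i‖ ^ 2
      = b * (Fintype.card ι).choose b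
        * ((Fintype.card ι - b) * ∑ i, ‖a i‖ ^ 2 + (b - 1) * ‖∑ i, a i‖ ^ 2) := by
  have hcount : ∑ B ∈ univ.powersetCard b, ‖∑ i ∈ B, a i‖ ^ 2
      = ∑ i, ∑ j, (#{B ∈ univ.powersetCard b | i ∈ B ∧ j ∈ B} : ℝ) * ⟪a i, a j⟫ := by
    simp only [norm_sum_sq_eq_sum_sum_inner]
    rw [sum_comm]
    refine sum_congr rfl fun i _ => ?_
    rw [sum_comm]
    refine sum_congr rfl fun j _ => ?_
    rw [← sum_filter, sum_const, nsmul_eq_mul]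
  rw [hcount, mul_sum]
  simp_rw [mul_sum, ← mul_assoc, card_mul_card_filter_mem_mem_powersetCard]
  simp only [mul_add, add_mul, sum_add_distrib, mul_ite, ite_mul, mul_zero, zero_mul, sum_ite_eq,
    mem_univ, if_true]
  rw [← real_inner_self_eq_norm_sq (∑ i, a i), sum_inner]
  simp only [inner_sum, real_inner_self_eq_norm_sq, mul_sum, mul_assoc]
  ring

theorem inv_choose_mul_sum_powersetCard_norm_inv_smul_sum_sq (a : ι → E) {b : ℕ} (hb : 1 ≤ b)
    (hbn : b ≤ Fintype.card ι) (hn : 2 ≤ Fintype.card ι) :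
    ((Fintype.card ι).choose b : ℝ)⁻¹
        * ∑ B ∈ univ.powersetCard b, ‖(b : ℝ)⁻¹ • ∑ i ∈ B, a i‖ ^ 2
      = ((Fintype.card ι - b) * ∑ i, ‖a i‖ ^ 2 + (b - 1) * ‖∑ i, a i‖ ^ 2)
        / (b * (Fintype.card ι * (Fintype.card ι - 1))) := by
  have hC : ((Fintype.card ι).choose b : ℝ) ≠ 0 := by exact_mod_cast (Nat.choose_pos hbn).ne'
  have hb0 : (b : ℝ) ≠ 0 := by positivity
  have hn1 : (Fintype.card ι : ℝ) - 1 ≠ 0 := by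
    have : (2 : ℝ) ≤ Fintype.card ι := by exact_mod_cast hn
    linarith
  have hid := card_mul_sum_powersetCard_norm_sum_sq a b
  simp only [norm_smul, mul_pow, norm_inv, Real.norm_natCast, ← mul_sum]
  field_simp
  linear_combination hid

end Sampling

section Bregman

variable {E : Type*} [NormedAddCommGroup E] [InnerProductSpace ℝ E]

def bregman (φ : E → ℝ) (φ' : E → E) (x y : E) : ℝ := φ x - φ y - ⟪φ' y, x - y⟫

theorem bregman_nonneg_iff {φ : E → ℝ} {φ' : E → E} {x y : E} :
    0 ≤ bregman φ φ' x y ↔ φ y + ⟪φ' y, x - y⟫ ≤ φ x := by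
  unfold bregman
  constructor <;> intro h <;> linarith

theorem bregman_smul_sum {ι : Type*} (s : Finset ι) (c : ℝ) (φ : ι → E → ℝ) (φ' : ι → E → E)
    (x y : E) :
    bregman (fun z => c * ∑ i ∈ s, φ i z) (fun z => c • ∑ i ∈ s, φ' i z) x y
      = c * ∑ i ∈ s, bregman (φ i) (φ' i) x y := by
  simp only [bregman, real_inner_smul_left, sum_inner, sum_sub_distrib]
  ring

theorem bregman_smul_sum_nonneg {ι : Type*} {s : Finset ι} {c : ℝ} {φ : ι → E → ℝ}
    {φ' : ι → E → E} {x y : E} (hc : 0 ≤ c) (h : ∀ i, 0 ≤ bregman (φ i) (φ' i) x y) :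
    0 ≤ bregman (fun z => c * ∑ i ∈ s, φ i z) (fun z => c • ∑ i ∈ s, φ' i z) x y :=
  (mul_nonneg hc (sum_nonneg fun i _ => h i)).trans_eq (bregman_smul_sum s c φ φ' x y).symm

theorem norm_sub_sq_le_two_mul_bregman {φ : E → ℝ} {φ' : E → E} {L : ℝ}
    (hsmooth : ∀ x y, φ y ≤ φ x + ⟪φ' x, y - x⟫ + L / 2 * ‖y - x‖ ^ 2)
    (hconv : ∀ x y, 0 ≤ bregman φ φ' x y) (x y : E) :
    ‖φ' x - φ' y‖ ^ 2 ≤ 2 * L * bregman φ φ' x y := by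
  rcases eq_or_ne x y with rfl | hxy
  · simp [bregman]
  have hL : 0 ≤ L := by
    have hpos : 0 < ‖x - y‖ ^ 2 := pow_pos (norm_pos_iff.mpr (sub_ne_zero.mpr hxy)) 2
    nlinarith [hsmooth y x, bregman_nonneg_iff.mp (hconv x y)]
  set g := φ' x - φ' y
  -- Smoothness at `x` and convexity at `y`, both evaluated at `x - t • g`, make this quadratic
  -- in `t` nonnegative; its discriminant gives the bound.
  have hquad : ∀ t : ℝ, 0 ≤ L / 2 * ‖g‖ ^ 2 * (t * t) + -‖g‖ ^ 2 * t + bregman φ φ' x y := by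
    intro t
    have hlow := bregman_nonneg_iff.mp (hconv (x - t • g) y)
    have hup := hsmooth x (x - t • g)
    rw [sub_sub_cancel_left, norm_neg, norm_smul, inner_neg_right, real_inner_smul_right,
      Real.norm_eq_abs, mul_pow, sq_abs] at hup
    rw [show x - t • g - y = (x - y) - t • g by abel, inner_sub_right,
      real_inner_smul_right] at hlow
    have hg : ⟪φ' x, g⟫ - ⟪φ' y, g⟫ = ‖g‖ ^ 2 := by
      rw [← inner_sub_left, real_inner_self_eq_norm_sq]
    unfold bregman
    linear_combination hlow + hup - t * hg
  have hdisc := discrim_le_zero hquad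
  rw [discrim] at hdisc
  nlinarith [sq_nonneg ‖g‖, mul_nonneg hL (hconv x y)]

theorem sum_norm_sub_sq_le_two_mul_sum_bregman {ι : Type*} {s : Finset ι} {φ : ι → E → ℝ}
    {φ' : ι → E → E} {Lφ : ι → ℝ} {M : ℝ}
    (hsmooth : ∀ i x y, φ i y ≤ φ i x + ⟪φ' i x, y - x⟫ + Lφ i / 2 * ‖y - x‖ ^ 2)
    (hconv : ∀ i x y, 0 ≤ bregman (φ i) (φ' i) x y) (hM : ∀ i ∈ s, Lφ i ≤ M) (x y : E) :
    ∑ i ∈ s, ‖φ' i x - φ' i y‖ ^ 2 ≤ 2 * M * ∑ i ∈ s, bregman (φ i) (φ' i) x y := by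
  rw [mul_sum]
  gcongr with i hi
  calc ‖φ' i x - φ' i y‖ ^ 2 ≤ 2 * Lφ i * bregman (φ i) (φ' i) x y :=
        norm_sub_sq_le_two_mul_bregman (hsmooth i) (hconv i) x y
    _ ≤ 2 * M * bregman (φ i) (φ' i) x y := by
        gcongr
        · exact hconv i x y
        · exact hM i hi

end Bregman

theorem stmt_7_general
    {d n b : ℕ} (hn : 2 ≤ n) (hb1 : 1 ≤ b) (hbn : b ≤ n)
    (f : Fin n → EuclideanSpace ℝ (Fin d) → ℝ)
    (f' : Fin n → EuclideanSpace ℝ (Fin d) → EuclideanSpace ℝ (Fin d))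
    (Li : Fin n → ℝ) (L : ℝ)
    -- each f_i is convex and L_i-smooth
    (hsmooth : ∀ i x y, f i y ≤ f i x + ⟪f' i x, y - x⟫ + Li i / 2 * ‖y - x‖ ^ 2)
    (hconv : ∀ i x y, f i x + ⟪f' i x, y - x⟫ ≤ f i y)
    -- f = (1/n) Σ f_i is itself L-smooth, with gradient ∇f = (1/n) Σ ∇f_i
    (hsmoothf : ∀ x y, (n : ℝ)⁻¹ * ∑ i, f i y
      ≤ (n : ℝ)⁻¹ * ∑ i, f i x + ⟪(n : ℝ)⁻¹ • ∑ i, f' i x, y - x⟫ + L / 2 * ‖y - x‖ ^ 2)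
    (xstar : EuclideanSpace ℝ (Fin d))
    (x : EuclideanSpace ℝ (Fin d)) :
    ((n.choose b : ℝ))⁻¹ * ∑ B ∈ (Finset.univ : Finset (Fin n)).powersetCard b,
        ‖(b : ℝ)⁻¹ • ∑ i ∈ B, f' i x - (b : ℝ)⁻¹ • ∑ i ∈ B, f' i xstar‖ ^ 2
    ≤ 2 * (((n : ℝ) - b) / (b * ((n : ℝ) - 1))
            * Finset.univ.sup' ⟨⟨0, lt_of_lt_of_le two_pos hn⟩, Finset.mem_univ _⟩ Li
          + (n : ℝ) * ((b : ℝ) - 1) / (b * ((n : ℝ) - 1)) * L)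
        * ((n : ℝ)⁻¹ * ∑ i, f i x - (n : ℝ)⁻¹ * ∑ i, f i xstar
          - ⟪(n : ℝ)⁻¹ • ∑ j, f' j xstar, x - xstar⟫) := by
  set F := fun y => (n : ℝ)⁻¹ * ∑ i, f i y
  set F' := fun y => (n : ℝ)⁻¹ • ∑ i, f' i y
  set Lmax := univ.sup' ⟨⟨0, lt_of_lt_of_le two_pos hn⟩, mem_univ _⟩ Li
  change _ ≤ _ * bregman F F' x xstar
  set D := bregman F F' x xstar
  set a := fun i => f' i x - f' i xstar
  have hnR : (2 : ℝ) ≤ n := by exact_mod_cast hn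
  have hconv' : ∀ i y z, 0 ≤ bregman (f i) (f' i) y z := fun i y z =>
    bregman_nonneg_iff.mpr (hconv i z y)
  have hT : ∑ i, ‖a i‖ ^ 2 ≤ 2 * Lmax * (n * D) := by
    rw [show D = _ from bregman_smul_sum univ (n : ℝ)⁻¹ f f' x xstar,
      mul_inv_cancel_left₀ (by positivity)]
    exact sum_norm_sub_sq_le_two_mul_sum_bregman hsmooth hconv'
      (fun i _ => le_sup' Li (mem_univ i)) x xstar
  have hU : ‖∑ i, a i‖ ^ 2 ≤ 2 * L * (n ^ 2 * D) := by
    have hsum : ∑ i, a i = (n : ℝ) • (F' x - F' xstar) := by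
      simp only [a, F', ← smul_sub, smul_smul, sum_sub_distrib]
      rw [mul_inv_cancel₀ (by positivity), one_smul]
    rw [hsum, norm_smul, mul_pow, Real.norm_natCast]
    have hF := norm_sub_sq_le_two_mul_bregman hsmoothf
      (fun y z => bregman_smul_sum_nonneg (by positivity) fun i => hconv' i y z) x xstar
    nlinarith [sq_nonneg (n : ℝ)]
  have hvar := inv_choose_mul_sum_powersetCard_norm_inv_smul_sum_sq a hb1
    (by simpa using hbn) (by simpa using hn)
  rw [Fintype.card_fin] at hvar
  simp only [← smul_sub, ← sum_sub_distrib]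
  calc _ = _ := hvar
    _ ≤ ((n - b) * (2 * Lmax * (n * D)) + (b - 1) * (2 * L * (n ^ 2 * D)))
          / (b * (n * (n - 1))) := by
        have hbR : (1 : ℝ) ≤ b := by exact_mod_cast hb1
        have hbnR : (b : ℝ) ≤ n := by exact_mod_cast hbn
        have hn1 : (0 : ℝ) ≤ n - 1 := by linarith
        gcongr
    _ = _ := by
        have hn1 : (n : ℝ) - 1 ≠ 0 := by linarith
        field_simp

/-- expected smoothness for `b`-nice sampling (minibatching without
replacement): `E_B[‖∇f_B(x) − ∇f_B(x*)‖²] ≤ 2 ℒ(b) D_f(x, x*)` where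
`ℒ(b) = ((n−b)/(b(n−1))) L_max + (n(b−1)/(b(n−1))) L`. -/
theorem stmt_7
    {d n b : ℕ} (hn : 2 ≤ n) (hb1 : 1 ≤ b) (hbn : b ≤ n)
    (f : Fin n → EuclideanSpace ℝ (Fin d) → ℝ)
    (f' : Fin n → EuclideanSpace ℝ (Fin d) → EuclideanSpace ℝ (Fin d))
    (Li : Fin n → ℝ) (L : ℝ)
    -- each f_i is convex and L_i-smooth
    (hsmooth : ∀ i x y, f i y ≤ f i x + ⟪f' i x, y - x⟫ + Li i / 2 * ‖y - x‖ ^ 2)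
    (hconv : ∀ i x y, f i x + ⟪f' i x, y - x⟫ ≤ f i y)
    -- f = (1/n) Σ f_i is itself L-smooth, with gradient ∇f = (1/n) Σ ∇f_i
    (hsmoothf : ∀ x y, (n : ℝ)⁻¹ * ∑ i, f i y
      ≤ (n : ℝ)⁻¹ * ∑ i, f i x + ⟪(n : ℝ)⁻¹ • ∑ i, f' i x, y - x⟫ + L / 2 * ‖y - x‖ ^ 2)
    -- x* is a minimizer of f
    (xstar : EuclideanSpace ℝ (Fin d))
    (hmin : ∀ y, (n : ℝ)⁻¹ * ∑ i, f i xstar ≤ (n : ℝ)⁻¹ * ∑ i, f i y)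
    (x : EuclideanSpace ℝ (Fin d)) :
    ((n.choose b : ℝ))⁻¹ * ∑ B ∈ (Finset.univ : Finset (Fin n)).powersetCard b,
        ‖(b : ℝ)⁻¹ • ∑ i ∈ B, f' i x - (b : ℝ)⁻¹ • ∑ i ∈ B, f' i xstar‖ ^ 2
    ≤ 2 * (((n : ℝ) - b) / (b * ((n : ℝ) - 1))
            * Finset.univ.sup' ⟨⟨0, lt_of_lt_of_le two_pos hn⟩, Finset.mem_univ _⟩ Li
          + (n : ℝ) * ((b : ℝ) - 1) / (b * ((n : ℝ) - 1)) * L)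
        * ((n : ℝ)⁻¹ * ∑ i, f i x - (n : ℝ)⁻¹ * ∑ i, f i xstar
          - ⟪(n : ℝ)⁻¹ • ∑ j, f' j xstar, x - xstar⟫) :=
  stmt_7_general hn hb1 hbn f f' Li L hsmooth hconv hsmoothf xstar x
end

section
/- For all x, w ∈ ℝ^d, the L-SVRG gradient estimator g = ∇f_v(x) − ∇f_v(w) + ∇f(w) satisfies E[‖g − ∇f(x*)‖²] ≤ 4 ℒ · D_f(x, x*) + 2 σ²(w), where σ²(w) = E[‖∇f_v(w) − ∇f_v(x*) − (∇f(w) − ∇f(x*))‖²]. -/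
open MeasureTheory Finset
open scoped RealInnerProductSpace

/-! The estimator minus `∇f(x*)` splits as `a - b` with `a = ∇f_v(x) − ∇f_v(x*)` and
`b = ∇f_v(w) − ∇f_v(x*) − (∇f(w) − ∇f(x*))`; the bound `‖a - b‖² ≤ 2‖a‖² + 2‖b‖²`,
integrated, and expected smoothness at `x` for `E‖a‖²` give the claim. -/

lemma norm_sub_sq_le_two_mul {E : Type*} [SeminormedAddCommGroup E] (a b : E) :
    ‖a - b‖ ^ 2 ≤ 2 * (‖a‖ ^ 2 + ‖b‖ ^ 2) :=
  (pow_le_pow_left₀ (norm_nonneg _) (norm_sub_le a b) 2).trans add_sq_le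

section

variable {Ω : Type*} [MeasurableSpace Ω] {μ : Measure Ω}

lemma integrable_comp_of_finite_range [IsFiniteMeasure μ] {α E : Type*} [MeasurableSpace α]
    [NormedAddCommGroup E] {v : Ω → α} (hv : Measurable v) (hv_fin : (Set.range v).Finite)
    {F : α → E} (hF : StronglyMeasurable F) : Integrable (fun ω => F (v ω)) μ := by
  obtain ⟨C, hC⟩ := (hv_fin.image fun a => ‖F a‖).bddAbove
  exact Integrable.of_bound (hF.comp_measurable hv).aestronglyMeasurable C
    (ae_of_all _ fun ω => hC ⟨v ω, ⟨ω, rfl⟩, rfl⟩)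

lemma integral_norm_sub_sq_le {E : Type*} [NormedAddCommGroup E] {a b : Ω → E}
    (ha : Integrable (fun ω => ‖a ω‖ ^ 2) μ) (hb : Integrable (fun ω => ‖b ω‖ ^ 2) μ) :
    ∫ ω, ‖a ω - b ω‖ ^ 2 ∂μ ≤ 2 * ∫ ω, ‖a ω‖ ^ 2 ∂μ + 2 * ∫ ω, ‖b ω‖ ^ 2 ∂μ := by
  calc ∫ ω, ‖a ω - b ω‖ ^ 2 ∂μ ≤ ∫ ω, 2 * (‖a ω‖ ^ 2 + ‖b ω‖ ^ 2) ∂μ :=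
        integral_mono_of_nonneg (ae_of_all _ fun _ => by positivity) ((ha.add hb).const_mul 2)
          (ae_of_all _ fun ω => norm_sub_sq_le_two_mul (a ω) (b ω))
    _ = 2 * ∫ ω, ‖a ω‖ ^ 2 ∂μ + 2 * ∫ ω, ‖b ω‖ ^ 2 ∂μ := by
        rw [integral_const_mul, integral_add ha hb, mul_add]

end

theorem stmt_8_general
    {d n : ℕ}
    {Ω : Type*} [MeasurableSpace Ω] (μ : Measure Ω) [IsProbabilityMeasure μ]
    (f : Fin n → EuclideanSpace ℝ (Fin d) → ℝ)
    (f' : Fin n → EuclideanSpace ℝ (Fin d) → EuclideanSpace ℝ (Fin d))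
    -- the sampling vector
    (v : Ω → Fin n → ℝ) (hv_meas : Measurable v) (hv_fin : (Set.range v).Finite)
    (xstar : EuclideanSpace ℝ (Fin d))
    -- expected smoothness with constant ℒ ≥ 0
    (𝓛 : ℝ)
    (hES : ∀ z : EuclideanSpace ℝ (Fin d),
      ∫ ω, ‖(n : ℝ)⁻¹ • ∑ i, v ω i • f' i z - (n : ℝ)⁻¹ • ∑ i, v ω i • f' i xstar‖ ^ 2 ∂μ
      ≤ 2 * 𝓛 * ((n : ℝ)⁻¹ * ∑ i, f i z - (n : ℝ)⁻¹ * ∑ i, f i xstar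
          - ⟪(n : ℝ)⁻¹ • ∑ j, f' j xstar, z - xstar⟫))
    (x w : EuclideanSpace ℝ (Fin d)) :
    ∫ ω, ‖((n : ℝ)⁻¹ • ∑ i, v ω i • f' i x - (n : ℝ)⁻¹ • ∑ i, v ω i • f' i w
          + (n : ℝ)⁻¹ • ∑ j, f' j w)
        - (n : ℝ)⁻¹ • ∑ j, f' j xstar‖ ^ 2 ∂μ
    ≤ 4 * 𝓛 * ((n : ℝ)⁻¹ * ∑ i, f i x - (n : ℝ)⁻¹ * ∑ i, f i xstar
          - ⟪(n : ℝ)⁻¹ • ∑ j, f' j xstar, x - xstar⟫)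
      + 2 * ∫ ω, ‖(n : ℝ)⁻¹ • ∑ i, v ω i • f' i w - (n : ℝ)⁻¹ • ∑ i, v ω i • f' i xstar
          - ((n : ℝ)⁻¹ • ∑ j, f' j w - (n : ℝ)⁻¹ • ∑ j, f' j xstar)‖ ^ 2 ∂μ := by
  set Fv : (Fin n → ℝ) → EuclideanSpace ℝ (Fin d) → EuclideanSpace ℝ (Fin d) :=
    fun u z => (n : ℝ)⁻¹ • ∑ i, u i • f' i z
  set G : EuclideanSpace ℝ (Fin d) → EuclideanSpace ℝ (Fin d) :=
    fun z => (n : ℝ)⁻¹ • ∑ j, f' j z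
  have hsplit : ∀ ω, (Fv (v ω) x - Fv (v ω) w + G w) - G xstar
      = (Fv (v ω) x - Fv (v ω) xstar) - (Fv (v ω) w - Fv (v ω) xstar - (G w - G xstar)) :=
    fun ω => by abel
  calc ∫ ω, ‖(Fv (v ω) x - Fv (v ω) w + G w) - G xstar‖ ^ 2 ∂μ
      = ∫ ω, ‖(Fv (v ω) x - Fv (v ω) xstar)
          - (Fv (v ω) w - Fv (v ω) xstar - (G w - G xstar))‖ ^ 2 ∂μ := by simp_rw [hsplit]
    _ ≤ 2 * ∫ ω, ‖Fv (v ω) x - Fv (v ω) xstar‖ ^ 2 ∂μ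
          + 2 * ∫ ω, ‖Fv (v ω) w - Fv (v ω) xstar - (G w - G xstar)‖ ^ 2 ∂μ :=
        integral_norm_sub_sq_le
          (integrable_comp_of_finite_range hv_meas hv_fin
            (by fun_prop : Continuous fun u => ‖Fv u x - Fv u xstar‖ ^ 2).stronglyMeasurable)
          (integrable_comp_of_finite_range hv_meas hv_fin
            (by fun_prop : Continuous fun u =>
              ‖Fv u w - Fv u xstar - (G w - G xstar)‖ ^ 2).stronglyMeasurable)
    _ ≤ _ := by linarith [hES x]

/-- the L-SVRG gradient estimator `g = ∇f_v(x) − ∇f_v(w) + ∇f(w)` satisfies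
`E[‖g − ∇f(x*)‖²] ≤ 4ℒ D_f(x, x*) + 2σ²(w)` with
`σ²(w) = E[‖∇f_v(w) − ∇f_v(x*) − (∇f(w) − ∇f(x*))‖²]`. -/
theorem stmt_8
    {d n : ℕ} (hn : 0 < n)
    {Ω : Type*} [MeasurableSpace Ω] (μ : Measure Ω) [IsProbabilityMeasure μ]
    (f : Fin n → EuclideanSpace ℝ (Fin d) → ℝ)
    (f' : Fin n → EuclideanSpace ℝ (Fin d) → EuclideanSpace ℝ (Fin d))
    (Li : Fin n → ℝ)
    (hsmooth : ∀ i x y, f i y ≤ f i x + ⟪f' i x, y - x⟫ + Li i / 2 * ‖y - x‖ ^ 2)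
    (hconv : ∀ i x y, f i x + ⟪f' i x, y - x⟫ ≤ f i y)
    -- the sampling vector
    (v : Ω → Fin n → ℝ) (hv_meas : Measurable v) (hv_fin : (Set.range v).Finite)
    (hv_nonneg : ∀ ω i, 0 ≤ v ω i) (hv_mean : ∀ i, ∫ ω, v ω i ∂μ = 1)
    -- x* minimizes f = (1/n) Σ f_i
    (xstar : EuclideanSpace ℝ (Fin d))
    (hmin : ∀ y, (n : ℝ)⁻¹ * ∑ i, f i xstar ≤ (n : ℝ)⁻¹ * ∑ i, f i y)
    -- expected smoothness with constant ℒ ≥ 0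
    (𝓛 : ℝ) (h𝓛 : 0 ≤ 𝓛)
    (hES : ∀ z : EuclideanSpace ℝ (Fin d),
      ∫ ω, ‖(n : ℝ)⁻¹ • ∑ i, v ω i • f' i z - (n : ℝ)⁻¹ • ∑ i, v ω i • f' i xstar‖ ^ 2 ∂μ
      ≤ 2 * 𝓛 * ((n : ℝ)⁻¹ * ∑ i, f i z - (n : ℝ)⁻¹ * ∑ i, f i xstar
          - ⟪(n : ℝ)⁻¹ • ∑ j, f' j xstar, z - xstar⟫))
    (x w : EuclideanSpace ℝ (Fin d)) :
    ∫ ω, ‖((n : ℝ)⁻¹ • ∑ i, v ω i • f' i x - (n : ℝ)⁻¹ • ∑ i, v ω i • f' i w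
          + (n : ℝ)⁻¹ • ∑ j, f' j w)
        - (n : ℝ)⁻¹ • ∑ j, f' j xstar‖ ^ 2 ∂μ
    ≤ 4 * 𝓛 * ((n : ℝ)⁻¹ * ∑ i, f i x - (n : ℝ)⁻¹ * ∑ i, f i xstar
          - ⟪(n : ℝ)⁻¹ • ∑ j, f' j xstar, x - xstar⟫)
      + 2 * ∫ ω, ‖(n : ℝ)⁻¹ • ∑ i, v ω i • f' i w - (n : ℝ)⁻¹ • ∑ i, v ω i • f' i xstar
          - ((n : ℝ)⁻¹ • ∑ j, f' j w - (n : ℝ)⁻¹ • ∑ j, f' j xstar)‖ ^ 2 ∂μ :=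
  stmt_8_general μ f f' v hv_meas hv_fin xstar 𝓛 hES x w
end

section
/- The b-SEGA auxiliary-vector update h⁺ = h + I_S(∇f(x) − h) satisfies, for all x, h ∈ ℝ^d: E[‖h⁺ − ∇f(x*)‖²] ≤ (1 − b/d) ‖h − ∇f(x*)‖² + (2bL/d) · D_f(x, x*). -/
/-!
Coordinate `j` of `h⁺ - ∇f(x*)` is that of `∇f(x) - ∇f(x*)` when `j ∈ S` and that of
`h - ∇f(x*)` otherwise. Each coordinate lies in `S` with probability `b / d`, so the expectation
is exactly `(1 - b/d) ‖h - ∇f(x*)‖² + (b/d) ‖∇f(x) - ∇f(x*)‖²`, and the theorem follows from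
`‖∇f(x) - ∇f(x*)‖² ≤ 2 L D_f(x, x*)`, which holds for every convex `L`-smooth function.
-/

open Finset
open scoped RealInnerProductSpace

/-- `maskE S a` is the vector `I_S a`: the coordinates of `a` in `S`, zero elsewhere. -/
def maskE {d : ℕ} (S : Finset (Fin d)) (a : EuclideanSpace ℝ (Fin d)) :
    EuclideanSpace ℝ (Fin d) := WithLp.toLp 2 (fun j => if j ∈ S then a j else 0)

section Smooth

variable {E : Type*} [NormedAddCommGroup E] [InnerProductSpace ℝ E]
  {f : E → ℝ} {f' : E → E} {L : ℝ}

def bregmanDiv (f : E → ℝ) (f' : E → E) (x y : E) : ℝ := f x - f y - ⟪f' y, x - y⟫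

lemma nonneg_of_smooth_of_convex [Nontrivial E]
    (hsmooth : ∀ x y, f y ≤ f x + ⟪f' x, y - x⟫ + L / 2 * ‖y - x‖ ^ 2)
    (hconv : ∀ x y, f x + ⟪f' x, y - x⟫ ≤ f y) : 0 ≤ L := by
  obtain ⟨e, he⟩ := exists_ne (0 : E)
  have hup := hsmooth 0 e
  have hlow := hconv 0 e
  have he_sq : 0 < ‖e‖ ^ 2 := pow_pos (norm_pos_iff.mpr he) 2
  simp only [sub_zero] at hup hlow
  nlinarith

/-- The usual descent step: compare `f` at `x - t (f' x - f' y)` from above (smoothness at `x`)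
and from below (convexity at `y`). -/
lemma mul_norm_sq_sub_le_bregmanDiv
    (hsmooth : ∀ x y, f y ≤ f x + ⟪f' x, y - x⟫ + L / 2 * ‖y - x‖ ^ 2)
    (hconv : ∀ x y, f x + ⟪f' x, y - x⟫ ≤ f y) (x y : E) (t : ℝ) :
    t * ‖f' x - f' y‖ ^ 2 - L / 2 * t ^ 2 * ‖f' x - f' y‖ ^ 2 ≤ bregmanDiv f f' x y := by
  set g := f' x - f' y
  have hup := hsmooth x (x - t • g)
  have hlow := hconv y (x - t • g)
  have htg : t * ⟪f' x, g⟫ - t * ⟪f' y, g⟫ = t * ‖g‖ ^ 2 := by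
    rw [← mul_sub, ← inner_sub_left, real_inner_self_eq_norm_sq]
  rw [sub_sub_cancel_left, inner_neg_right, real_inner_smul_right, norm_neg, norm_smul,
    mul_pow, Real.norm_eq_abs, sq_abs] at hup
  rw [sub_right_comm, inner_sub_right, real_inner_smul_right] at hlow
  unfold bregmanDiv
  linarith

lemma le_two_mul_mul_of_forall_mul_sub_le {a L D : ℝ} (hL : 0 ≤ L)
    (h : ∀ t : ℝ, t * a - L / 2 * t ^ 2 * a ≤ D) : a ≤ 2 * L * D := by
  rcases hL.lt_or_eq with hL | rfl
  · have := h L⁻¹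
    field_simp at this
    linarith
  · by_contra! ha
    rw [mul_zero, zero_mul] at ha
    have := h ((D + 1) / a)
    rw [zero_div, zero_mul, zero_mul, sub_zero, div_mul_cancel₀ _ ha.ne'] at this
    linarith

theorem norm_sub_sq_le_two_mul_bregmanDiv
    (hsmooth : ∀ x y, f y ≤ f x + ⟪f' x, y - x⟫ + L / 2 * ‖y - x‖ ^ 2)
    (hconv : ∀ x y, f x + ⟪f' x, y - x⟫ ≤ f y) (x y : E) :
    ‖f' x - f' y‖ ^ 2 ≤ 2 * L * bregmanDiv f f' x y := by
  rcases subsingleton_or_nontrivial E with hE | hE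
  · simp [Subsingleton.elim x y, bregmanDiv]
  · exact le_two_mul_mul_of_forall_mul_sub_le (nonneg_of_smooth_of_convex hsmooth hconv)
      (mul_norm_sq_sub_le_bregmanDiv hsmooth hconv x y)

end Smooth

section Sampling

variable {ι : Type*} [Fintype ι] [DecidableEq ι] {b : ℕ}

lemma card_filter_mem_powersetCard_univ (hb : 1 ≤ b) (j : ι) :
    #{S ∈ powersetCard b (univ : Finset ι) | j ∈ S} = (Fintype.card ι - 1).choose (b - 1) := by
  simpa using card_filter_powersetCard_subset {j} univ b (subset_univ _) (by simpa)

lemma sum_powersetCard_univ_sum_mem {M : Type*} [AddCommMonoid M] (hb : 1 ≤ b) (w : ι → M) :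
    ∑ S ∈ powersetCard b (univ : Finset ι), ∑ j ∈ S, w j
      = (Fintype.card ι - 1).choose (b - 1) • ∑ j, w j := by
  rw [sum_comm' (t' := univ) (s' := fun j => {S ∈ powersetCard b univ | j ∈ S}) (by simp),
    smul_sum]
  simp only [sum_const, card_filter_mem_powersetCard_univ hb]

end Sampling

lemma norm_sq_add_maskE_sub {d : ℕ} (S : Finset (Fin d)) (g h c : EuclideanSpace ℝ (Fin d)) :
    ‖h + maskE S (g - h) - c‖ ^ 2 = ‖h - c‖ ^ 2 + ∑ j ∈ S, ((g - c) j ^ 2 - (h - c) j ^ 2) := by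
  rw [EuclideanSpace.norm_sq_eq, EuclideanSpace.norm_sq_eq, ← univ_inter S, ← sum_ite_mem,
    ← sum_add_distrib]
  refine sum_congr rfl fun j _ => ?_
  by_cases hj : j ∈ S <;> simp [maskE, hj]

lemma choose_pred_div_choose {d b : ℕ} (hb1 : 1 ≤ b) (hbd : b ≤ d) :
    ((d - 1).choose (b - 1) : ℝ) / d.choose b = b / d := by
  obtain ⟨b, rfl⟩ := Nat.exists_eq_add_of_le' hb1
  obtain ⟨d, rfl⟩ := Nat.exists_eq_add_of_le' (hb1.trans hbd)
  have hchoose : ((d + 1).choose (b + 1) : ℝ) ≠ 0 := by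
    exact_mod_cast (Nat.choose_pos hbd).ne'
  rw [div_eq_div_iff hchoose (by positivity)]
  simp only [Nat.add_sub_cancel]
  exact_mod_cast (mul_comm _ _).trans ((Nat.add_one_mul_choose_eq d b).trans (mul_comm _ _))

lemma average_norm_sq_add_maskE_sub {d b : ℕ} (hb1 : 1 ≤ b) (hbd : b ≤ d)
    (g h c : EuclideanSpace ℝ (Fin d)) :
    ((d.choose b : ℝ))⁻¹ * ∑ S ∈ powersetCard b univ, ‖h + maskE S (g - h) - c‖ ^ 2
      = (1 - (b : ℝ) / d) * ‖h - c‖ ^ 2 + b / d * ‖g - c‖ ^ 2 := by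
  simp only [norm_sq_add_maskE_sub, sum_add_distrib, sum_const, card_powersetCard, card_univ,
    Fintype.card_fin, sum_powersetCard_univ_sum_mem hb1, nsmul_eq_mul, sum_sub_distrib,
    ← EuclideanSpace.real_norm_sq_eq]
  have hchoose : (d.choose b : ℝ) ≠ 0 := by exact_mod_cast (Nat.choose_pos hbd).ne'
  rw [← choose_pred_div_choose hb1 hbd]
  field_simp
  ring

/-- the `b`-SEGA auxiliary-vector update `h⁺ = h + I_S(∇f(x) − h)` satisfies
`E[‖h⁺ − ∇f(x*)‖²] ≤ (1 − b/d)‖h − ∇f(x*)‖² + (2bL/d) D_f(x, x*)`. -/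
theorem stmt_18
    {d b : ℕ} (hb1 : 1 ≤ b) (hbd : b ≤ d)
    (f : EuclideanSpace ℝ (Fin d) → ℝ)
    (f' : EuclideanSpace ℝ (Fin d) → EuclideanSpace ℝ (Fin d)) (L : ℝ)
    (hsmooth : ∀ x y, f y ≤ f x + ⟪f' x, y - x⟫ + L / 2 * ‖y - x‖ ^ 2)
    (hconv : ∀ x y, f x + ⟪f' x, y - x⟫ ≤ f y)
    (xstar : EuclideanSpace ℝ (Fin d))
    (x h : EuclideanSpace ℝ (Fin d)) :
    ((d.choose b : ℝ))⁻¹ * ∑ S ∈ (Finset.univ : Finset (Fin d)).powersetCard b,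
        ‖h + maskE S (f' x - h) - f' xstar‖ ^ 2
    ≤ (1 - (b : ℝ) / d) * ‖h - f' xstar‖ ^ 2
      + 2 * b * L / d * (f x - f xstar - ⟪f' xstar, x - xstar⟫) := by
  calc _ = (1 - (b : ℝ) / d) * ‖h - f' xstar‖ ^ 2 + b / d * ‖f' x - f' xstar‖ ^ 2 :=
        average_norm_sq_add_maskE_sub hb1 hbd _ _ _
    _ ≤ (1 - (b : ℝ) / d) * ‖h - f' xstar‖ ^ 2 + b / d * (2 * L * bregmanDiv f f' x xstar) := by
      gcongr
      exact norm_sub_sq_le_two_mul_bregmanDiv hsmooth hconv x xstar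
    _ = _ := by unfold bregmanDiv; ring
end
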